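/- Let (R, 𝔪, k) be a commutative noetherian local ring and t ≥ 2. If the canonical projection ρ_t : R → R/𝔪^t is small, then ρ_j : R → R/𝔪^j is small for all j ≥ t. -/

import Mathlib

open CategoryTheory CategoryTheory.MonoidalCategory CategoryTheory.Abelian
open IsLocalRing PowerSeries TensorProduct HomologicalComplex

noncomputable section

set_option maxHeartbeats 1000000

/-- The length of a module, as a natural number: the Krull dimension of its lattice of
submodules.  For a finite length module this is the usual length; for a module annihilated
by the maximal ideal of a local ring it is the dimension over the residue field. -/
def lengthNat (R : Type) [CommRing R] (M : Type) [AddCommGroup M] [Module R M] : ℕ :=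
  ((Order.krullDim (Submodule R M)).unbotD 0).toNat

/-- The residue field of a local ring, as an object of its module category. -/
def resFld (R : Type) [CommRing R] [IsLocalRing R] : ModuleCat R :=
  ModuleCat.of R (IsLocalRing.ResidueField R)

/-- The `i`-th Tor module `Tor_i^R(M, N)`. -/
def TorM (R : Type) [CommRing R] (i : ℕ) (M N : ModuleCat R) : ModuleCat R :=
  ((CategoryTheory.Tor (ModuleCat R) i).obj M).obj N

/-- The map `Tor_i^R(f, N) : Tor_i^R(M, N) → Tor_i^R(M', N)` induced in the first variable
by `f : M → M'`. -/
def TorMap (R : Type) [CommRing R] (i : ℕ) {M M' : ModuleCat R} (f : M ⟶ M')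
    (N : ModuleCat R) : TorM R i M N ⟶ TorM R i M' N :=
  ((CategoryTheory.Tor (ModuleCat R) i).map f).app N

/-- The Poincaré series `P^R_M(z) = Σ_i rank_k Tor_i^R(M, k) zⁱ` of a module `M` over a
local ring `R` with residue field `k`. -/
def poincareSeries (R : Type) [CommRing R] [IsLocalRing R] (M : ModuleCat R) :
    PowerSeries ℚ :=
  PowerSeries.mk fun i => (lengthNat R (TorM R i M (resFld R)) : ℚ)

/-- `𝔪^j` as an object of the module category. -/
def mpow (R : Type) [CommRing R] [IsLocalRing R] (j : ℕ) : ModuleCat R :=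
  ModuleCat.of R ↥(maximalIdeal R ^ j)

/-- `ν_j : 𝔪^j → 𝔪^(j-1)`, the canonical inclusion. -/
def nu (R : Type) [CommRing R] [IsLocalRing R] (j : ℕ) : mpow R j ⟶ mpow R (j - 1) :=
  ModuleCat.ofHom (Submodule.inclusion (Ideal.pow_le_pow_right (Nat.sub_le j 1)))

/-- `R/𝔪^j` as an object of the module category. -/
def rmod (R : Type) [CommRing R] [IsLocalRing R] (j : ℕ) : ModuleCat R :=
  ModuleCat.of R (R ⧸ maximalIdeal R ^ j)

/-- `ρ_j : R → R/𝔪^j`, the canonical projection. -/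
def rho (R : Type) [CommRing R] [IsLocalRing R] (j : ℕ) : R →+* R ⧸ (maximalIdeal R ^ j) :=
  Ideal.Quotient.mk (maximalIdeal R ^ j)

/-- A quotient of a local ring by an ideal contained in the maximal ideal is local. -/
lemma isLocalRing_quotient (R : Type) [CommRing R] [IsLocalRing R] {I : Ideal R}
    (hI : I ≤ maximalIdeal R) : IsLocalRing (R ⧸ I) := by
  haveI : Nontrivial (R ⧸ I) := Ideal.Quotient.nontrivial_iff.mpr
    (fun h => (maximalIdeal.isMaximal R).ne_top (top_le_iff.mp (h ▸ hI)))
  exact IsLocalRing.of_surjective' (Ideal.Quotient.mk I) Ideal.Quotient.mk_surjective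

/-- `R/𝔪^j` is a local ring for `j ≥ 1`. -/
lemma isLocalRing_rmod (R : Type) [CommRing R] [IsLocalRing R] {j : ℕ} (hj : 1 ≤ j) :
    IsLocalRing (R ⧸ maximalIdeal R ^ j) :=
  isLocalRing_quotient R (Ideal.pow_le_self (by omega))

/-- The canonical projection `R/𝔪^j → R/𝔪^(j-1)` as a map of `R`-modules. -/
def etaBar (R : Type) [CommRing R] [IsLocalRing R] (j : ℕ) : rmod R j ⟶ rmod R (j - 1) :=
  ModuleCat.ofHom (Submodule.mapQ _ _ LinearMap.id
    (le_trans (Ideal.pow_le_pow_right (Nat.sub_le j 1)) (le_of_eq (Submodule.comap_id _).symm)))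

/-- `R/𝔪^i` as a module over `R/𝔪^j` (for `i ≤ j`), via the canonical projection. -/
def rmodOver (R : Type) [CommRing R] [IsLocalRing R] (i j : ℕ) (h : i ≤ j) :
    ModuleCat (R ⧸ maximalIdeal R ^ j) :=
  (ModuleCat.restrictScalars
    (Ideal.Quotient.factor (Ideal.pow_le_pow_right h))).obj
      (ModuleCat.of (R ⧸ maximalIdeal R ^ i) (R ⧸ maximalIdeal R ^ i))

instance restrictScalarsAdditive {R S : Type} [CommRing R] [CommRing S] (φ : R →+* S) :
    (ModuleCat.restrictScalars φ).Additive where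
  map_add := by intros; rfl

/-- The canonical `R`-linear map `M ⊗_R Y → M ⊗_S Y` for `S`-modules `M`, `Y`
regarded as `R`-modules via `φ : R → S`. -/
def tensorCompareApp {R S : Type} [CommRing R] [CommRing S] (φ : R →+* S)
    (M Y : ModuleCat S) :
    ((tensoringLeft (ModuleCat R)).obj ((ModuleCat.restrictScalars φ).obj M)).obj
        ((ModuleCat.restrictScalars φ).obj Y) ⟶
      (ModuleCat.restrictScalars φ).obj (((tensoringLeft (ModuleCat S)).obj M).obj Y) :=
  letI : Module R M := Module.compHom _ φ
  letI : Module R Y := Module.compHom _ φ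
  letI : Module R (((tensoringLeft (ModuleCat S)).obj M).obj Y) := Module.compHom _ φ
  ModuleCat.ofHom <| TensorProduct.lift
    (LinearMap.mk₂ R (fun (m : M) (y : Y) => (m ⊗ₜ[S] y :
        (((tensoringLeft (ModuleCat S)).obj M).obj Y)))
      (fun m₁ m₂ y => TensorProduct.add_tmul m₁ m₂ y)
      (fun r m y => (TensorProduct.smul_tmul' (R := S) (φ r) (m : M) (y : Y)).symm)
      (fun m y₁ y₂ => TensorProduct.tmul_add m y₁ y₂)
      (fun r m y => by
        show m ⊗ₜ[S] (φ r • y) = φ r • (m ⊗ₜ[S] y)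
        rw [TensorProduct.tmul_smul]))

/-- The comparison `M ⊗_R (-) ⟶ M ⊗_S (-)` as a natural transformation. -/
def tensorCompare {R S : Type} [CommRing R] [CommRing S] (φ : R →+* S) (M : ModuleCat S) :
    (ModuleCat.restrictScalars φ ⋙
        (tensoringLeft (ModuleCat R)).obj ((ModuleCat.restrictScalars φ).obj M)) ⟶
      ((tensoringLeft (ModuleCat S)).obj M ⋙ ModuleCat.restrictScalars φ) where
  app Y := tensorCompareApp φ M Y
  naturality Y Y' f := by
    apply ModuleCat.hom_ext
    apply TensorProduct.ext'
    intro m y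
    rfl

/-- Given a ring homomorphism `φ : R → S`, `S`-modules `M`, `N`, a projective resolution
`P` of `N` over `R`, a projective resolution `Q` of `N` over `S`, and a chain map
`g : P → Q` lifting the identity of `N` (over the restriction of scalars), this says that
the induced map `H_i(M ⊗_R P) → H_i(M ⊗_S Q)`, i.e. the change of rings map
`Tor_i^φ(M,N) : Tor_i^R(M,N) → Tor_i^S(M,N)`, is a monomorphism.  Such lifts `g` always
exist and are unique up to homotopy, so this is exactly the usual condition that
`Tor_i^φ(M,N)` is injective. -/
def TorComparisonMono {R S : Type} [CommRing R] [CommRing S] (φ : R →+* S)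
    (M N : ModuleCat S) (i : ℕ) : Prop :=
  ∀ (P : ProjectiveResolution ((ModuleCat.restrictScalars φ).obj N))
    (Q : ProjectiveResolution N)
    (g : P.complex ⟶
      ((ModuleCat.restrictScalars φ).mapHomologicalComplex (ComplexShape.down ℕ)).obj
        Q.complex),
    g ≫ ((ModuleCat.restrictScalars φ).mapHomologicalComplex _).map Q.π ≫
        (HomologicalComplex.singleMapHomologicalComplex (ModuleCat.restrictScalars φ)
          (ComplexShape.down ℕ) 0).hom.app N = P.π →
    Mono (HomologicalComplex.homologyMap
      ((((tensoringLeft (ModuleCat R)).obj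
            ((ModuleCat.restrictScalars φ).obj M)).mapHomologicalComplex
          (ComplexShape.down ℕ)).map g ≫
        (NatTrans.mapHomologicalComplex (tensorCompare φ M) (ComplexShape.down ℕ)).app
          Q.complex) i)

/-- A surjective local homomorphism `φ : R → S` is small if the change of rings map
`Tor_i^φ(k,k) : Tor_i^R(k,k) → Tor_i^S(k,k)` is injective for all `i`. -/
def IsSmallHom {R S : Type} [CommRing R] [CommRing S] [IsLocalRing R] [IsLocalRing S]
    (φ : R →+* S) : Prop :=
  ∀ i : ℕ, TorComparisonMono φ (ModuleCat.of S (IsLocalRing.ResidueField S))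
    (ModuleCat.of S (IsLocalRing.ResidueField S)) i

/-! `ρ_t` is the composite of `ρ_j` with the surjection `η : R/𝔪^j → R/𝔪^t`, and `η` induces an
isomorphism of residue fields. Hence `Tor^{ρ_t}(k, k)` factors as `Tor^η(k, k) ∘ Tor^{ρ_j}(k, k)`
(up to that isomorphism), and injectivity of the composite forces injectivity of `Tor^{ρ_j}(k, k)`.
On chain level, `Tor^η` comes from comparing a projective resolution over `R/𝔪^j` with the
restriction of scalars of one over `R/𝔪^t`; the latter is still a resolution because
restriction of scalars is exact. -/

universe u

namespace CategoryTheory.ProjectiveResolution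

def transport {C : Type*} [Category C] [Abelian C] {X Y : C} (P : ProjectiveResolution X)
    (e : X ≅ Y) : ProjectiveResolution Y where
  complex := P.complex
  π := P.π ≫ (ChainComplex.single₀ C).map e.hom

theorem exists_lift_to_mapHomologicalComplex {C D : Type*} [Category C] [Abelian C] [Category D]
    [Abelian D] (F : D ⥤ C) [F.Additive] [Limits.PreservesFiniteLimits F]
    [Limits.PreservesFiniteColimits F] {X : C} {Z : D} (f : X ⟶ F.obj Z)
    (P : ProjectiveResolution X) (Q : ProjectiveResolution Z) :
    ∃ g : P.complex ⟶ (F.mapHomologicalComplex _).obj Q.complex,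
      g ≫ (F.mapHomologicalComplex _).map Q.π ≫
          (singleMapHomologicalComplex F (ComplexShape.down ℕ) 0).hom.app Z =
        P.π ≫ (ChainComplex.single₀ C).map f := by
  have := preservesEpimorphisms_of_preservesColimitsOfShape F
  have : Epi (F.map (Q.π.f 0)) := F.map_epi _
  let σ := (singleMapHomologicalComplex F (ComplexShape.down ℕ) 0).app Z
  have exact₀ : (ShortComplex.mk (F.map (Q.complex.d 1 0)) (F.map (Q.π.f 0)) (by
      rw [← F.map_comp, Q.complex_d_comp_π_f_zero, F.map_zero])).Exact := Q.exact₀.map F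
  have exact_succ (n : ℕ) : (ShortComplex.mk (F.map (Q.complex.d (n + 2) (n + 1)))
      (F.map (Q.complex.d (n + 1) n))
      (by rw [← F.map_comp, Q.complex.d_comp_d, F.map_zero])).Exact :=
    (Q.exact_succ n).map F
  let g₀ : P.complex.X 0 ⟶ F.obj (Q.complex.X 0) :=
    Projective.factorThru (P.π.f 0 ≫ ((ChainComplex.single₀ C).map f).f 0 ≫ σ.inv.f 0 :
      P.complex.X 0 ⟶ F.obj (((ChainComplex.single₀ D).obj Z).X 0)) (F.map (Q.π.f 0))
  have hg₀ : g₀ ≫ F.map (Q.π.f 0) = P.π.f 0 ≫ ((ChainComplex.single₀ C).map f).f 0 ≫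
      σ.inv.f 0 := Projective.factorThru_comp _ _
  let g₁ : P.complex.X 1 ⟶ F.obj (Q.complex.X 1) :=
    exact₀.liftFromProjective (P.complex.d 1 0 ≫ g₀) (by
      rw [Category.assoc, hg₀]
      exact (P.complex_d_comp_π_f_zero_assoc _).trans Limits.zero_comp)
  have hg₁ : g₁ ≫ F.map (Q.complex.d 1 0) = P.complex.d 1 0 ≫ g₀ :=
    exact₀.liftFromProjective_comp _ _
  refine ⟨ChainComplex.mkHom _ _ g₀ g₁ hg₁ fun n ⟨_, g', w⟩ =>
    ⟨(exact_succ n).liftFromProjective (P.complex.d (n + 2) (n + 1) ≫ g') (by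
      erw [Category.assoc, w]
      exact (P.complex.d_comp_d_assoc _ _ _ _).trans Limits.zero_comp),
    (exact_succ n).liftFromProjective_comp _ _⟩, ?_⟩
  refine HomologicalComplex.to_single_hom_ext ?_
  erw [HomologicalComplex.comp_f, ChainComplex.mkHom_f_0, reassoc_of% hg₀, Category.assoc,
    Category.assoc, ← HomologicalComplex.comp_f, σ.inv_hom_id, HomologicalComplex.id_f,
    Category.comp_id]
  rfl

end CategoryTheory.ProjectiveResolution

theorem singleMapHomologicalComplex_comp_hom_app {ι C₁ C₂ C₃ : Type*} [Category C₁]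
    [Category C₂] [Category C₃] [Limits.HasZeroMorphisms C₁] [Limits.HasZeroMorphisms C₂]
    [Limits.HasZeroMorphisms C₃] [Limits.HasZeroObject C₁] [Limits.HasZeroObject C₂]
    [Limits.HasZeroObject C₃] (c : ComplexShape ι) [DecidableEq ι] (F : C₁ ⥤ C₂) (G : C₂ ⥤ C₃)
    [F.PreservesZeroMorphisms] [G.PreservesZeroMorphisms] (j : ι) (X : C₁) :
    (singleMapHomologicalComplex (F ⋙ G) c j).hom.app X =
      (G.mapHomologicalComplex c).map ((singleMapHomologicalComplex F c j).hom.app X) ≫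
        (singleMapHomologicalComplex G c j).hom.app (F.obj X) := by
  ext i
  by_cases h : i = j
  · subst h
    simp only [HomologicalComplex.comp_f, singleMapHomologicalComplex_hom_app_self,
      Functor.mapHomologicalComplex_map_f, Functor.comp_map]
    erw [G.map_comp, Category.assoc, ← G.map_comp_assoc (singleObjXSelf c i (F.obj X)).inv,
      Iso.inv_hom_id, G.map_id, Category.id_comp]
    rfl
  · exact (HomologicalComplex.isZero_single_obj_X c j _ i h).eq_of_tgt _ _

def residueFieldIsoRestrictScalars {S T : Type u} [CommRing S] [CommRing T] [IsLocalRing S]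
    [IsLocalRing T] (ψ : S →+* T) (hψ : Function.Surjective ψ) :
    ModuleCat.of S (ResidueField S) ≅
      (ModuleCat.restrictScalars ψ).obj (ModuleCat.of T (ResidueField T)) :=
  have : IsLocalHom ψ := .of_surjective ψ hψ
  let e : ResidueField S →ₗ[S]
      (ModuleCat.restrictScalars ψ).obj (ModuleCat.of T (ResidueField T)) :=
    { toFun := ResidueField.map ψ
      map_add' := map_add _
      map_smul' := fun s x => by
        obtain ⟨a, rfl⟩ := residue_surjective x
        exact (ResidueField.map ψ).map_mul (residue S s) (residue S a) }
  (LinearEquiv.ofBijective e ⟨(ResidueField.map ψ).injective, fun y => by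
    obtain ⟨b, rfl⟩ := residue_surjective y
    obtain ⟨a, rfl⟩ := hψ b
    exact ⟨residue S a, ResidueField.map_residue ψ a⟩⟩).toModuleIso

section ChangeOfRings

variable {R S T : Type} [CommRing R] [CommRing S] [CommRing T] (φ : R →+* S) (ψ : S →+* T)

theorem comp_lift_comp_π_eq_transport_π {N : ModuleCat S} {N' : ModuleCat T}
    (eN : N ≅ (ModuleCat.restrictScalars ψ).obj N')
    {P : ProjectiveResolution ((ModuleCat.restrictScalars φ).obj N)}
    {Q : ProjectiveResolution N} {Q' : ProjectiveResolution N'}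
    {g : P.complex ⟶
      ((ModuleCat.restrictScalars φ).mapHomologicalComplex (ComplexShape.down ℕ)).obj Q.complex}
    {g' : Q.complex ⟶
      ((ModuleCat.restrictScalars ψ).mapHomologicalComplex (ComplexShape.down ℕ)).obj Q'.complex}
    (hg : g ≫ ((ModuleCat.restrictScalars φ).mapHomologicalComplex _).map Q.π ≫
        (singleMapHomologicalComplex (ModuleCat.restrictScalars φ)
          (ComplexShape.down ℕ) 0).hom.app N = P.π)
    (hg' : g' ≫ ((ModuleCat.restrictScalars ψ).mapHomologicalComplex _).map Q'.π ≫
        (singleMapHomologicalComplex (ModuleCat.restrictScalars ψ)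
          (ComplexShape.down ℕ) 0).hom.app N' = Q.π ≫ (ChainComplex.single₀ _).map eN.hom) :
    (g ≫ ((ModuleCat.restrictScalars φ).mapHomologicalComplex _).map g') ≫
        ((ModuleCat.restrictScalars (ψ.comp φ)).mapHomologicalComplex _).map Q'.π ≫
        (singleMapHomologicalComplex (ModuleCat.restrictScalars (ψ.comp φ))
          (ComplexShape.down ℕ) 0).hom.app N' =
      (P.transport ((ModuleCat.restrictScalars φ).mapIso eN)).π := by
  let Fφ := (ModuleCat.restrictScalars φ).mapHomologicalComplex (ComplexShape.down ℕ)
  let Fψ := (ModuleCat.restrictScalars ψ).mapHomologicalComplex (ComplexShape.down ℕ)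
  let Aψ := (singleMapHomologicalComplex (ModuleCat.restrictScalars ψ)
    (ComplexShape.down ℕ) 0).hom.app N'
  let Aφ := (singleMapHomologicalComplex (ModuleCat.restrictScalars φ) (ComplexShape.down ℕ) 0).hom
  have hsingle : (singleMapHomologicalComplex (ModuleCat.restrictScalars (ψ.comp φ))
      (ComplexShape.down ℕ) 0).hom.app N' =
      Fφ.map Aψ ≫ Aφ.app ((ModuleCat.restrictScalars ψ).obj N') :=
    singleMapHomologicalComplex_comp_hom_app _ (ModuleCat.restrictScalars ψ)
      (ModuleCat.restrictScalars φ) 0 N'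
  have hmap : ((ModuleCat.restrictScalars (ψ.comp φ)).mapHomologicalComplex
    (ComplexShape.down ℕ)).map Q'.π = Fφ.map (Fψ.map Q'.π) := rfl
  have hnat := Aφ.naturality eN.hom
  simp only [Functor.comp_map] at hnat
  rw [hsingle, hmap]
  have hassoc : (g ≫ Fφ.map g') ≫ Fφ.map (Fψ.map Q'.π) ≫ Fφ.map Aψ ≫
      Aφ.app ((ModuleCat.restrictScalars ψ).obj N') =
      g ≫ Fφ.map (g' ≫ Fψ.map Q'.π ≫ Aψ) ≫ Aφ.app ((ModuleCat.restrictScalars ψ).obj N') := by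
    simp only [Functor.map_comp, Category.assoc]
  refine hassoc.trans ?_
  rw [hg', Functor.map_comp, Category.assoc, hnat, reassoc_of% hg]
  rfl

theorem TorComparisonMono.of_comp {M N : ModuleCat S} {M' N' : ModuleCat T}
    (eM : M ≅ (ModuleCat.restrictScalars ψ).obj M')
    (eN : N ≅ (ModuleCat.restrictScalars ψ).obj N') {i : ℕ}
    (h : TorComparisonMono (ψ.comp φ) M' N' i) : TorComparisonMono φ M N i := by
  intro P Q g hg
  let Fφ := (ModuleCat.restrictScalars φ).mapHomologicalComplex (ComplexShape.down ℕ)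
  let Q' : ProjectiveResolution N' := (HasProjectiveResolution.out (Z := N')).some
  obtain ⟨g', hg'⟩ := ProjectiveResolution.exists_lift_to_mapHomologicalComplex
    (ModuleCat.restrictScalars ψ) eN.hom Q Q'
  have hψφ := h (P.transport ((ModuleCat.restrictScalars φ).mapIso eN)) Q' (g ≫ Fφ.map g')
    (comp_lift_comp_π_eq_transport_π φ ψ eN hg hg')
  let torφ := (((tensoringLeft (ModuleCat R)).obj
        ((ModuleCat.restrictScalars φ).obj M)).mapHomologicalComplex (ComplexShape.down ℕ)).map g ≫
      (NatTrans.mapHomologicalComplex (tensorCompare φ M) (ComplexShape.down ℕ)).app Q.complex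
  let torψφ := (((tensoringLeft (ModuleCat R)).obj
        ((ModuleCat.restrictScalars (ψ.comp φ)).obj M')).mapHomologicalComplex
        (ComplexShape.down ℕ)).map (g ≫ Fφ.map g') ≫
      (NatTrans.mapHomologicalComplex (tensorCompare (ψ.comp φ) M') (ComplexShape.down ℕ)).app
        Q'.complex
  let torψ := Fφ.map ((((tensoringLeft (ModuleCat S)).obj M).mapHomologicalComplex
        (ComplexShape.down ℕ)).map g' ≫
      (NatTrans.mapHomologicalComplex ((tensoringLeft _).map eM.hom) (ComplexShape.down ℕ)).app
        (((ModuleCat.restrictScalars ψ).mapHomologicalComplex (ComplexShape.down ℕ)).obj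
          Q'.complex) ≫
      (NatTrans.mapHomologicalComplex (tensorCompare ψ M') (ComplexShape.down ℕ)).app Q'.complex)
  let e := (NatIso.mapHomologicalComplex
    ((tensoringLeft (ModuleCat R)).mapIso ((ModuleCat.restrictScalars φ).mapIso eM))
    (ComplexShape.down ℕ)).app P.complex
  -- On homology this reads `Tor^ψ ∘ Tor^φ = Tor^{ψφ} ∘ e`, with `e` induced by `eM`.
  have hfactor : torφ ≫ torψ = e.hom ≫ torψφ := by
    ext n : 2
    exact TensorProduct.ext' fun _ _ => rfl
  have hmono : Mono (HomologicalComplex.homologyMap (torφ ≫ torψ) i) := by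
    erw [hfactor, HomologicalComplex.homologyMap_comp]
    exact mono_comp' inferInstance hψφ
  erw [HomologicalComplex.homologyMap_comp] at hmono
  exact @mono_of_mono _ _ _ _ _ _ (HomologicalComplex.homologyMap torψ i) hmono

end ChangeOfRings

/-- 2.2(3).  If `ρ_t : R → R/𝔪^t` is small (`t ≥ 2`), then
`ρ_j : R → R/𝔪^j` is small for all `j ≥ t`. -/
theorem statement6 (R : Type) [CommRing R] [IsLocalRing R]
    (t : ℕ) (ht : 2 ≤ t)
    (hsmall : letI := isLocalRing_rmod R (show 1 ≤ t by omega); IsSmallHom (rho R t)) :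
    ∀ j, ∀ _ : t ≤ j, letI := isLocalRing_rmod R (show 1 ≤ j by omega)
      IsSmallHom (rho R j) := by
  intro j hj
  let := isLocalRing_rmod R (show 1 ≤ j by omega)
  let := isLocalRing_rmod R (show 1 ≤ t by omega)
  let ε := residueFieldIsoRestrictScalars _
    (Ideal.Quotient.factor_surjective (Ideal.pow_le_pow_right (I := maximalIdeal R) hj))
  -- `rho R t` is definitionally `(Ideal.Quotient.factor _).comp (rho R j)`.
  exact fun i => TorComparisonMono.of_comp (rho R j) _ ε ε (hsmall i)
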